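/- arXiv:0705.3231 — 5 statements merged into one kernel-verified Lean document; each statement's English description precedes it below -/
import Mathlib

section
/- Let G be a group and k a field of characteristic ≠ 2, and let kG be the group algebra with the standard Hopf algebra structure (Δ(g) = g ⊗ g, S(g) = g⁻¹ for g ∈ G). Then the space C¹_ad(kG; kG) = { f ∈ Hom_k(kG, kG) | fμ = μ(f ⊗ 1) + μ(1 ⊗ f) and Δf = (f ⊗ 1)Δ + (1 ⊗ f)Δ } is zero; i.e., the only linear map on kG that is simultaneously a derivation for multiplication and a coderivation for comultiplication is the zero map. -/
/-!
Contracting the first tensor factor against the coefficient of `g` sends `Δ c` to `c_g • g`.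
Applied to the coderivation identity at `g`, it sends `Δ (f g)` and `f g ⊗ g` both to
`(f g)_g • g`, and `g ⊗ f g` to `f g`; hence `f g = 0` on every basis element.
-/

open TensorProduct

/-- The comultiplication of the group Hopf algebra `kG`, `Δ(g) = g ⊗ g` on group
elements. -/
noncomputable def groupComul (k G : Type*) [Field k] [Group G] :
    MonoidAlgebra k G →ₗ[k] MonoidAlgebra k G ⊗[k] MonoidAlgebra k G :=
  (Finsupp.lsum k fun g =>
    LinearMap.toSpanSingleton k _ (MonoidAlgebra.of k G g ⊗ₜ[k] MonoidAlgebra.of k G g)) ∘ₗ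
    (MonoidAlgebra.coeffLinearEquiv k).toLinearMap

section GroupComul

open MonoidAlgebra

variable {k G : Type*} [Field k] [Group G]

theorem groupComul_basis (g : G) :
    groupComul k G (basis G k g) = basis G k g ⊗ₜ[k] basis G k g := by
  simp [groupComul]

variable (k) in
noncomputable def coordContractLeft (g : G) :
    MonoidAlgebra k G ⊗[k] MonoidAlgebra k G →ₗ[k] MonoidAlgebra k G :=
  (TensorProduct.lid k _).toLinearMap ∘ₗ ((basis G k).coord g).rTensor _

theorem coordContractLeft_tmul (g : G) (a b : MonoidAlgebra k G) :
    coordContractLeft k g (a ⊗ₜ[k] b) = (basis G k).coord g a • b :=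
  rfl

theorem coordContractLeft_groupComul (g : G) (c : MonoidAlgebra k G) :
    coordContractLeft k g (groupComul k G c) = (basis G k).coord g c • basis G k g := by
  classical
  suffices coordContractLeft k g ∘ₗ groupComul k G =
      LinearMap.toSpanSingleton k _ (basis G k g) ∘ₗ (basis G k).coord g from
    LinearMap.congr_fun this c
  refine (basis G k).ext fun h => ?_
  rw [LinearMap.comp_apply, groupComul_basis, coordContractLeft_tmul, LinearMap.comp_apply,
    LinearMap.toSpanSingleton_apply, Module.Basis.coord_apply, Module.Basis.repr_self,
    Finsupp.single_apply]
  split_ifs with hgh <;> simp [hgh]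

end GroupComul

theorem group_algebra_C1_zero_general (k G : Type*) [Field k] [Group G]
    (f : MonoidAlgebra k G →ₗ[k] MonoidAlgebra k G)
    (hcoder : groupComul k G ∘ₗ f =
      (TensorProduct.map f LinearMap.id) ∘ₗ groupComul k G +
        (TensorProduct.map LinearMap.id f) ∘ₗ groupComul k G) :
    f = 0 := by
  refine (MonoidAlgebra.basis G k).ext fun g => ?_
  have h := congr_arg (coordContractLeft k g)
    (LinearMap.congr_fun hcoder (MonoidAlgebra.basis G k g))
  have hone : (MonoidAlgebra.basis G k).coord g (MonoidAlgebra.basis G k g) = 1 := by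
    rw [Module.Basis.coord_apply, Module.Basis.repr_self, Finsupp.single_eq_same]
  simp only [LinearMap.comp_apply, LinearMap.add_apply, groupComul_basis, map_add, map_tmul,
    LinearMap.id_apply, coordContractLeft_groupComul, coordContractLeft_tmul, hone,
    one_smul, left_eq_add] at h
  exact h

/-- `C¹_ad(kG; kG) = 0`: the only linear endomorphism of the group algebra `kG`
(char k ≠ 2) that is simultaneously a derivation for the multiplication and a
coderivation for the comultiplication is the zero map. -/
theorem group_algebra_C1_zero (k G : Type*) [Field k] [Group G]
    (hchar : (2 : k) ≠ 0) (f : MonoidAlgebra k G →ₗ[k] MonoidAlgebra k G)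
    (hder : ∀ a b : MonoidAlgebra k G, f (a * b) = f a * b + a * f b)
    (hcoder : groupComul k G ∘ₗ f =
      (TensorProduct.map f LinearMap.id) ∘ₗ groupComul k G +
        (TensorProduct.map LinearMap.id f) ∘ₗ groupComul k G) :
    f = 0 :=
  group_algebra_C1_zero_general k G f hcoder
end

section
/- Let G be a finite group, k a field with char(k) ≠ 2, and k^G the function Hopf algebra with adjoint map ad satisfying ad(δ_g ⊗ δ_h) = δ_g if h = 1 and 0 otherwise. If a bilinear map η: k^G ⊗ k^G → k^G satisfies the first adjoint 2-cocycle condition ad(η ⊗ 1) + η(ad ⊗ 1) − η(1 ⊗ μ) = 0, then η = 0. In particular Z²_ad(k^G; k^G) = 0. -/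
/-- The characteristic function `δ_g` of `g ∈ G`, in the function algebra `k^G`. -/
def charFun {G : Type*} [DecidableEq G] (k : Type*) [Field k] (g : G) : G → k :=
  fun x => if x = g then 1 else 0

/-! On `k^G` the adjoint map is the action through the counit `ε(c) = c 1`, i.e.
`ad(x ⊗ c) = c(1) x`. Putting `b = δ_1` in the cocycle condition, and using
`δ_1 c = c(1) δ_1`, gives `c(1) η(a ⊗ δ_1) + η(a ⊗ c) − c(1) η(a ⊗ δ_1) = 0`, so
`η(a ⊗ c) = 0`. -/

section charFun

variable {G : Type*} [DecidableEq G] {k : Type*} [Field k]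

theorem charFun_eq_single (g : G) : charFun k g = Pi.single g 1 := by
  funext x
  simp [charFun, Pi.single_apply]

theorem charFun_mul (g : G) (f : G → k) : charFun k g * f = f g • charFun k g := by
  funext x
  by_cases hx : x = g <;> simp [charFun, hx]

end charFun

theorem ad_eq_eval_one_smul {G k : Type*} [Group G] [Fintype G] [DecidableEq G] [Field k]
    {ad : (G → k) →ₗ[k] (G → k) →ₗ[k] (G → k)}
    (had : ∀ g h : G, ad (charFun k g) (charFun k h) = if h = 1 then charFun k g else 0)
    (x c : G → k) : ad x c = c 1 • x := by
  have hbasis : ad = (LinearMap.lsmul k (G → k)).flip.compl₂ (LinearMap.proj 1) := by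
    refine LinearMap.ext_basis (Pi.basisFun k G) (Pi.basisFun k G) fun g h => ?_
    simp only [Pi.basisFun_apply, ← charFun_eq_single, had]
    by_cases hh : h = 1 <;> simp [charFun, hh, eq_comm]
  rw [hbasis]
  rfl

theorem function_algebra_Z2_zero_general (G k : Type*) [Group G] [Fintype G] [DecidableEq G]
    [Field k]
    (ad : (G → k) →ₗ[k] (G → k) →ₗ[k] (G → k))
    (had : ∀ g h : G, ad (charFun k g) (charFun k h) =
      if h = 1 then charFun k g else 0)
    (η : (G → k) →ₗ[k] (G → k) →ₗ[k] (G → k))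
    (hcoc : ∀ a b c : G → k, ad (η a b) c + η (ad a b) c - η a (b * c) = 0) :
    η = 0 := by
  refine LinearMap.ext fun a => LinearMap.ext fun c => ?_
  have hunit : ad a (charFun k 1) = a := by
    simp [ad_eq_eval_one_smul had, charFun]
  have h := hcoc a (charFun k 1) c
  rwa [ad_eq_eval_one_smul had, hunit, charFun_mul, map_smul, add_sub_right_comm, sub_self,
    zero_add] at h

/-- For the function Hopf algebra `k^G` of a finite group `G` over a field `k`
with char `k ≠ 2`, whose adjoint map satisfies `ad(δ_g ⊗ δ_h) = δ_g` if `h = 1`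
and `0` otherwise, any bilinear map `η : k^G ⊗ k^G → k^G` satisfying the first
adjoint 2-cocycle condition `ad(η ⊗ 1) + η(ad ⊗ 1) − η(1 ⊗ μ) = 0` is zero.
In particular `Z²_ad(k^G; k^G) = 0`. -/
theorem function_algebra_Z2_zero (G k : Type*) [Group G] [Fintype G] [DecidableEq G]
    [Field k] (hchar : (2 : k) ≠ 0)
    (ad : (G → k) →ₗ[k] (G → k) →ₗ[k] (G → k))
    (had : ∀ g h : G, ad (charFun k g) (charFun k h) =
      if h = 1 then charFun k g else 0)
    (η : (G → k) →ₗ[k] (G → k) →ₗ[k] (G → k))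
    (hcoc : ∀ a b c : G → k, ad (η a b) c + η (ad a b) c - η a (b * c) = 0) :
    η = 0 :=
  function_algebra_Z2_zero_general G k ad had η hcoc
end

section
/- Let H be the bosonization of the superline over a field k (char k ≠ 2) and α, β, γ ∈ k. Define the bilinear map φ: H ⊗ H → H on the basis {1, g, x, gx} by: φ(g ⊗ x) = φ(g ⊗ gx) = α·1, φ(x ⊗ g) = −α·1, φ(gx ⊗ g) = γg, φ(gx ⊗ x) = β·1 + γx, φ(gx ⊗ gx) = −β·1 + γx, and φ = 0 on all other pairs of basis elements. Then φ satisfies both adjoint 2-cocycle conditions: ad(φ ⊗ 1) + φ(ad ⊗ 1) − φ(1 ⊗ μ) = 0 and (φ ⊗ μ)(1 ⊗ τ ⊗ 1)(Δ ⊗ Δ) = (1 ⊗ μ)(τ ⊗ 1)(1 ⊗ Δ)(1 ⊗ φ)(τ ⊗ 1)(1 ⊗ Δ). -/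
/-!
Both cocycle conditions are multilinear, so they only need to be checked on the basis
`{1, g, x, gx}`. There `Δ` and the antipode are determined by `Δ g = g ⊗ g`,
`Δ x = x ⊗ 1 + g ⊗ x`, `S g = g`, `S x = -gx`, which give `Δ (gx) = gx ⊗ g + 1 ⊗ gx` and
`S (gx) = x`; and every product of basis elements is `0` or `±` a basis element by
`g² = 1`, `x² = 0`, `xg = -gx`. Each instance of the two conditions is then a linear identity
in `α, β, γ`.
-/

open TensorProduct

/-- The adjoint map of a Hopf algebra, `ad(a ⊗ b) = S(b₁) a b₂`. -/
noncomputable def HopfAdjoint (k H : Type*) [CommSemiring k] [Semiring H]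
    [HopfAlgebra k H] : H ⊗[k] H →ₗ[k] H :=
  (LinearMap.mul' k H) ∘ₗ
    (TensorProduct.map
      ((LinearMap.mul' k H) ∘ₗ
        (TensorProduct.map (HopfAlgebra.antipode (R := k)) LinearMap.id) ∘ₗ
        (TensorProduct.comm k H H).toLinearMap)
      LinearMap.id) ∘ₗ
    (TensorProduct.assoc k H H H).symm.toLinearMap ∘ₗ
    (TensorProduct.map LinearMap.id Coalgebra.comul)

/-- The transposition `τ ⊗ 1` on `H ⊗ (H ⊗ H)`, swapping the first two factors. -/
noncomputable def tauOne (k H : Type*) [CommSemiring k] [AddCommMonoid H] [Module k H] :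
    H ⊗[k] (H ⊗[k] H) →ₗ[k] H ⊗[k] (H ⊗[k] H) :=
  (TensorProduct.assoc k H H H).toLinearMap ∘ₗ
    (TensorProduct.map (TensorProduct.comm k H H).toLinearMap LinearMap.id) ∘ₗ
    (TensorProduct.assoc k H H H).symm.toLinearMap

section HopfAdjoint

variable {k H : Type*} [CommSemiring k] [Semiring H] [HopfAlgebra k H]

theorem hopfAdjoint_tmul_of_comul_eq {b c d : H} (h : Coalgebra.comul (R := k) b = c ⊗ₜ[k] d)
    (a : H) : HopfAdjoint k H (a ⊗ₜ[k] b) = HopfAlgebra.antipode k c * a * d := by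
  simp [HopfAdjoint, h, mul_assoc]

theorem hopfAdjoint_tmul_of_comul_eq_add {b c d e f : H}
    (h : Coalgebra.comul (R := k) b = c ⊗ₜ[k] d + e ⊗ₜ[k] f) (a : H) :
    HopfAdjoint k H (a ⊗ₜ[k] b) =
      HopfAlgebra.antipode k c * a * d + HopfAlgebra.antipode k e * a * f := by
  simp [HopfAdjoint, h, tmul_add, mul_assoc]

end HopfAdjoint

theorem tauOne_tmul {k H : Type*} [CommSemiring k] [AddCommMonoid H] [Module k H]
    (a b c : H) : tauOne k H (a ⊗ₜ[k] (b ⊗ₜ[k] c)) = b ⊗ₜ[k] (a ⊗ₜ[k] c) := by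
  simp [tauOne]

section BasisExt

variable {k M N P Q : Type*} [CommSemiring k] [AddCommMonoid M] [Module k M]
  [AddCommMonoid N] [Module k N] [AddCommMonoid P] [Module k P] [AddCommMonoid Q] [Module k Q]
  {ι κ ν : Type*}

theorem TensorProduct.ext_of_basis_mem (bM : Module.Basis ι k M) (bN : Module.Basis κ k N)
    {S : Set M} {T : Set N} (hS : ∀ i, bM i ∈ S) (hT : ∀ j, bN j ∈ T)
    {f f' : M ⊗[k] N →ₗ[k] Q} (h : ∀ a ∈ S, ∀ b ∈ T, f (a ⊗ₜ b) = f' (a ⊗ₜ b)) : f = f' :=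
  (bM.tensorProduct bN).ext fun ⟨i, j⟩ => by simpa using h _ (hS i) _ (hT j)

theorem TensorProduct.ext_threefold_of_basis_mem (bM : Module.Basis ι k M)
    (bN : Module.Basis κ k N) (bP : Module.Basis ν k P) {S : Set M} {T : Set N} {U : Set P}
    (hS : ∀ i, bM i ∈ S) (hT : ∀ j, bN j ∈ T) (hU : ∀ l, bP l ∈ U)
    {f f' : M ⊗[k] N ⊗[k] P →ₗ[k] Q}
    (h : ∀ a ∈ S, ∀ b ∈ T, ∀ c ∈ U, f (a ⊗ₜ b ⊗ₜ c) = f' (a ⊗ₜ b ⊗ₜ c)) : f = f' :=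
  ((bM.tensorProduct bN).tensorProduct bP).ext fun ⟨⟨i, j⟩, l⟩ => by
    simpa using h _ (hS i) _ (hT j) _ (hU l)

end BasisExt

namespace Superline

variable {k H : Type*} [CommSemiring k] {g x : H}

theorem comul_g_mul_x [Semiring H] [Bialgebra k H] (hg2 : g * g = 1)
    (hΔx : Coalgebra.comul (R := k) x = x ⊗ₜ[k] 1 + g ⊗ₜ[k] x)
    (hΔg : Coalgebra.comul (R := k) g = g ⊗ₜ[k] g) :
    Coalgebra.comul (R := k) (g * x) = (g * x) ⊗ₜ[k] g + (1 : H) ⊗ₜ[k] (g * x) := by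
  simp [Bialgebra.comul_mul, hΔg, hΔx, mul_add, Algebra.TensorProduct.tmul_mul_tmul, hg2]

theorem antipode_g_mul_x [Ring H] [HopfAlgebra k H] (hg2 : g * g = 1) (hxg : x * g = -(g * x))
    (hSx : HopfAlgebra.antipode k x = -(g * x)) (hSg : HopfAlgebra.antipode k g = g) :
    HopfAlgebra.antipode k (g * x) = x := by
  rw [HopfAlgebra.antipode_mul_antidistrib, hSx, hSg, neg_mul, mul_assoc, hxg, mul_neg,
    neg_neg, ← mul_assoc, hg2, one_mul]

end Superline

set_option maxHeartbeats 1000000 in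
theorem superline_two_cocycle_general (k H : Type*) [Field k] [Ring H]
    [HopfAlgebra k H] (g x : H) (α β γ : k)
    (B : Module.Basis (Fin 4) k H)
    (hB0 : B 0 = 1) (hB1 : B 1 = g) (hB2 : B 2 = x) (hB3 : B 3 = g * x)
    (hx2 : x * x = 0) (hg2 : g * g = 1) (hxg : x * g = -(g * x))
    (hΔx : Coalgebra.comul (R := k) x = x ⊗ₜ[k] 1 + g ⊗ₜ[k] x)
    (hΔg : Coalgebra.comul (R := k) g = g ⊗ₜ[k] g)
    (hSx : HopfAlgebra.antipode (R := k) x = -(g * x))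
    (hSg : HopfAlgebra.antipode (R := k) g = g)
    (φ : H ⊗[k] H →ₗ[k] H)
    -- the nonzero values of φ
    (hφ1 : φ (g ⊗ₜ[k] x) = α • (1 : H))
    (hφ2 : φ (g ⊗ₜ[k] (g * x)) = α • (1 : H))
    (hφ3 : φ (x ⊗ₜ[k] g) = -(α • (1 : H)))
    (hφ4 : φ ((g * x) ⊗ₜ[k] g) = γ • g)
    (hφ5 : φ ((g * x) ⊗ₜ[k] x) = β • (1 : H) + γ • x)
    (hφ6 : φ ((g * x) ⊗ₜ[k] (g * x)) = -(β • (1 : H)) + γ • x)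
    -- φ vanishes on all other pairs of basis elements
    (hφ01 : φ ((1 : H) ⊗ₜ[k] (1 : H)) = 0) (hφ02 : φ ((1 : H) ⊗ₜ[k] g) = 0)
    (hφ03 : φ ((1 : H) ⊗ₜ[k] x) = 0) (hφ04 : φ ((1 : H) ⊗ₜ[k] (g * x)) = 0)
    (hφ05 : φ (g ⊗ₜ[k] (1 : H)) = 0) (hφ06 : φ (g ⊗ₜ[k] g) = 0)
    (hφ07 : φ (x ⊗ₜ[k] (1 : H)) = 0) (hφ08 : φ (x ⊗ₜ[k] x) = 0)
    (hφ09 : φ (x ⊗ₜ[k] (g * x)) = 0) (hφ10 : φ ((g * x) ⊗ₜ[k] (1 : H)) = 0) :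
    (HopfAdjoint k H ∘ₗ TensorProduct.map φ LinearMap.id +
        φ ∘ₗ TensorProduct.map (HopfAdjoint k H) LinearMap.id -
        φ ∘ₗ (TensorProduct.map LinearMap.id (LinearMap.mul' k H)) ∘ₗ
          (TensorProduct.assoc k H H H).toLinearMap = 0) ∧
      (TensorProduct.map φ (LinearMap.mul' k H) ∘ₗ
          (TensorProduct.tensorTensorTensorComm k H H H H).toLinearMap ∘ₗ
          TensorProduct.map (Coalgebra.comul (R := k)) (Coalgebra.comul (R := k)) =
        TensorProduct.map LinearMap.id (LinearMap.mul' k H) ∘ₗ tauOne k H ∘ₗ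
          TensorProduct.map LinearMap.id (Coalgebra.comul (R := k)) ∘ₗ
          TensorProduct.map LinearMap.id φ ∘ₗ tauOne k H ∘ₗ
          TensorProduct.map LinearMap.id (Coalgebra.comul (R := k))) := by
  have hB : ∀ i, B i ∈ ({1, g, x, g * x} : Set H) := by
    intro i; fin_cases i <;> simp [hB0, hB1, hB2, hB3]
  have hΔ1 : Coalgebra.comul (R := k) (1 : H) = (1 : H) ⊗ₜ[k] (1 : H) := by
    rw [Bialgebra.comul_one, Algebra.TensorProduct.one_def]
  have hΔgx := Superline.comul_g_mul_x hg2 hΔx hΔg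
  have hSgx := Superline.antipode_g_mul_x hg2 hxg hSx hSg
  -- together with `mul_assoc`, `hg2`, `hx2`, `hxg`, these rewrite every word in `g, x`
  -- to `0` or `± gᵃxᵇ`
  have hgg (y : H) : g * (g * y) = y := by rw [← mul_assoc, hg2, one_mul]
  have hxg' (y : H) : x * (g * y) = -(g * (x * y)) := by
    rw [← mul_assoc, hxg, neg_mul, mul_assoc]
  constructor
  · refine TensorProduct.ext_threefold_of_basis_mem B B B hB hB hB ?_
    simp only [Set.mem_insert_iff, Set.mem_singleton_iff]
    rintro a (ha | ha | ha | ha) b (hb | hb | hb | hb) c (hc | hc | hc | hc) <;>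
      rw [ha, hb, hc] <;>
      simp [hopfAdjoint_tmul_of_comul_eq hΔ1, hopfAdjoint_tmul_of_comul_eq hΔg,
        hopfAdjoint_tmul_of_comul_eq_add hΔx, hopfAdjoint_tmul_of_comul_eq_add hΔgx,
        hSx, hSg, hSgx, mul_assoc, hgg, hxg', hg2, hx2, hxg,
        hφ1, hφ2, hφ3, hφ4, hφ5, hφ6, hφ01, hφ02, hφ03, hφ04, hφ05, hφ06, hφ07, hφ08,
        hφ09, hφ10, add_tmul, neg_tmul, tmul_neg] <;>
      abel
  · refine TensorProduct.ext_of_basis_mem B B hB hB ?_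
    simp only [Set.mem_insert_iff, Set.mem_singleton_iff]
    rintro a (ha | ha | ha | ha) b (hb | hb | hb | hb) <;> rw [ha, hb] <;>
      simp [tauOne_tmul, hΔ1, hΔg, hΔx, hΔgx, mul_assoc, hgg, hxg', hg2, hx2, hxg,
        hφ1, hφ2, hφ3, hφ4, hφ5, hφ6, hφ01, hφ02, hφ03, hφ04, hφ05, hφ06, hφ07, hφ08,
        hφ09, hφ10, tmul_add, add_tmul, tmul_neg, neg_tmul, smul_tmul'] <;>
      abel

/-- For the bosonization of the superline `H` (basis `{1, g, x, gx}`) over a field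
`k` of characteristic `≠ 2` and `α, β, γ ∈ k`, the bilinear map `φ` given by
`φ(g ⊗ x) = φ(g ⊗ gx) = α·1`, `φ(x ⊗ g) = −α·1`, `φ(gx ⊗ g) = γ g`,
`φ(gx ⊗ x) = β·1 + γ x`, `φ(gx ⊗ gx) = −β·1 + γ x`, and `0` on all other pairs
of basis elements, satisfies both adjoint 2-cocycle conditions:
`ad(φ ⊗ 1) + φ(ad ⊗ 1) − φ(1 ⊗ μ) = 0` and
`(φ ⊗ μ)(1 ⊗ τ ⊗ 1)(Δ ⊗ Δ) = (1 ⊗ μ)(τ ⊗ 1)(1 ⊗ Δ)(1 ⊗ φ)(τ ⊗ 1)(1 ⊗ Δ)`. -/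
theorem superline_two_cocycle (k H : Type*) [Field k] [Ring H]
    [HopfAlgebra k H] (hchar : (2 : k) ≠ 0) (g x : H) (α β γ : k)
    (B : Module.Basis (Fin 4) k H)
    (hB0 : B 0 = 1) (hB1 : B 1 = g) (hB2 : B 2 = x) (hB3 : B 3 = g * x)
    (hx2 : x * x = 0) (hg2 : g * g = 1) (hxg : x * g = -(g * x))
    (hΔx : Coalgebra.comul (R := k) x = x ⊗ₜ[k] 1 + g ⊗ₜ[k] x)
    (hΔg : Coalgebra.comul (R := k) g = g ⊗ₜ[k] g)
    (hεx : Coalgebra.counit (R := k) x = 0)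
    (hεg : Coalgebra.counit (R := k) g = 1)
    (hSx : HopfAlgebra.antipode (R := k) x = -(g * x))
    (hSg : HopfAlgebra.antipode (R := k) g = g)
    (φ : H ⊗[k] H →ₗ[k] H)
    -- the nonzero values of φ
    (hφ1 : φ (g ⊗ₜ[k] x) = α • (1 : H))
    (hφ2 : φ (g ⊗ₜ[k] (g * x)) = α • (1 : H))
    (hφ3 : φ (x ⊗ₜ[k] g) = -(α • (1 : H)))
    (hφ4 : φ ((g * x) ⊗ₜ[k] g) = γ • g)
    (hφ5 : φ ((g * x) ⊗ₜ[k] x) = β • (1 : H) + γ • x)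
    (hφ6 : φ ((g * x) ⊗ₜ[k] (g * x)) = -(β • (1 : H)) + γ • x)
    -- φ vanishes on all other pairs of basis elements
    (hφ01 : φ ((1 : H) ⊗ₜ[k] (1 : H)) = 0) (hφ02 : φ ((1 : H) ⊗ₜ[k] g) = 0)
    (hφ03 : φ ((1 : H) ⊗ₜ[k] x) = 0) (hφ04 : φ ((1 : H) ⊗ₜ[k] (g * x)) = 0)
    (hφ05 : φ (g ⊗ₜ[k] (1 : H)) = 0) (hφ06 : φ (g ⊗ₜ[k] g) = 0)
    (hφ07 : φ (x ⊗ₜ[k] (1 : H)) = 0) (hφ08 : φ (x ⊗ₜ[k] x) = 0)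
    (hφ09 : φ (x ⊗ₜ[k] (g * x)) = 0) (hφ10 : φ ((g * x) ⊗ₜ[k] (1 : H)) = 0) :
    (HopfAdjoint k H ∘ₗ TensorProduct.map φ LinearMap.id +
        φ ∘ₗ TensorProduct.map (HopfAdjoint k H) LinearMap.id -
        φ ∘ₗ (TensorProduct.map LinearMap.id (LinearMap.mul' k H)) ∘ₗ
          (TensorProduct.assoc k H H H).toLinearMap = 0) ∧
      (TensorProduct.map φ (LinearMap.mul' k H) ∘ₗ
          (TensorProduct.tensorTensorTensorComm k H H H H).toLinearMap ∘ₗ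
          TensorProduct.map (Coalgebra.comul (R := k)) (Coalgebra.comul (R := k)) =
        TensorProduct.map LinearMap.id (LinearMap.mul' k H) ∘ₗ tauOne k H ∘ₗ
          TensorProduct.map LinearMap.id (Coalgebra.comul (R := k)) ∘ₗ
          TensorProduct.map LinearMap.id φ ∘ₗ tauOne k H ∘ₗ
          TensorProduct.map LinearMap.id (Coalgebra.comul (R := k))) :=
  superline_two_cocycle_general k H g x α β γ B hB0 hB1 hB2 hB3 hx2 hg2 hxg hΔx hΔg hSx hSg φ hφ1
    hφ2 hφ3 hφ4 hφ5 hφ6 hφ01 hφ02 hφ03 hφ04 hφ05 hφ06 hφ07 hφ08 hφ09 hφ10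
end

section
/- Let G be a group, k a field (or abelian group), and a: G × G → k a function satisfying a(x, y) + a(y⁻¹xy, z) − a(x, yz) = 0 for all x, y, z ∈ G (a conjugate-groupoid 2-cocycle). Define ψ(x, y) = a(x, y). Then ψ satisfies the rack 2-cocycle condition: ψ(x, y) + ψ(x ◁ y, z) = ψ(x, z) + ψ(x ◁ z, y ◁ z) for all x, y, z ∈ G, where x ◁ y = y⁻¹xy. -/
theorem add_eq_of_conj_groupoid_cocycle {G k : Type*} [Group G] [AddCommGroup k]
    {a : G → G → k} (hcoc : ∀ x y z : G, a x y + a (y⁻¹ * x * y) z - a x (y * z) = 0)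
    (x y z : G) : a x y + a (y⁻¹ * x * y) z = a x (y * z) :=
  sub_eq_zero.mp (hcoc x y z)

/-- A conjugate-groupoid 2-cocycle `a : G × G → k` (i.e.
`a(x,y) + a(y⁻¹xy, z) − a(x, yz) = 0`) satisfies the rack 2-cocycle condition
`ψ(x,y) + ψ(x ◁ y, z) = ψ(x,z) + ψ(x ◁ z, y ◁ z)` with `ψ = a` and `x ◁ y = y⁻¹xy`. -/
theorem groupoid_two_cocycle_is_rack_two_cocycle (G k : Type*) [Group G]
    [AddCommGroup k] (a : G → G → k)
    (hcoc : ∀ x y z : G, a x y + a (y⁻¹ * x * y) z - a x (y * z) = 0) :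
    ∀ x y z : G,
      a x y + a (y⁻¹ * x * y) z =
        a x z + a (z⁻¹ * x * z) (z⁻¹ * y * z) := by
  intro x y z
  calc a x y + a (y⁻¹ * x * y) z
      = a x (y * z) := add_eq_of_conj_groupoid_cocycle hcoc x y z
    _ = a x (z * (z⁻¹ * y * z)) := by group
    _ = a x z + a (z⁻¹ * x * z) (z⁻¹ * y * z) :=
        (add_eq_of_conj_groupoid_cocycle hcoc x z _).symm
end

section
/- Let G be a group, k an abelian group, and c: G³ → k a function satisfying c(x, y, z) + c(x, yz, w) = c(x ◁ y, z, w) + c(x, y, zw) for all x, y, z, w ∈ G, where x ◁ y = y⁻¹xy. Define θ(x, y, z) = c(x, y, z) − c(x, z, z⁻¹yz). Then θ satisfies the rack 3-cocycle condition: θ(x,y,z) + θ(x ◁ z, y ◁ z, w) + θ(x, z, w) = θ(x ◁ y, z, w) + θ(x, y, w) + θ(x ◁ w, y ◁ w, z ◁ w) for all x, y, z, w ∈ G. -/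
namespace ConjGroupoidCocycle

variable {G k : Type*} [Group G] [AddCommGroup k]

def groupoidCoboundary (c : G → G → G → k) (x y z w : G) : k :=
  c x y z + c x (y * z) w - c (y⁻¹ * x * y) z w - c x y (z * w)

def rackCoboundary (θ : G → G → G → k) (x y z w : G) : k :=
  (θ x y z + θ (z⁻¹ * x * z) (z⁻¹ * y * z) w + θ x z w) -
    (θ (y⁻¹ * x * y) z w + θ x y w + θ (w⁻¹ * x * w) (w⁻¹ * y * w) (w⁻¹ * z * w))

def toRackCochain (c : G → G → G → k) (x y z : G) : k :=
  c x y z - c x z (z⁻¹ * y * z)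

/-- The six groupoid coboundaries run over the orderings of `y, z, w`, signed by parity, each letter conjugated by
those it is moved past, so that every triple still multiplies to `y * z * w`. -/
theorem rackCoboundary_toRackCochain (c : G → G → G → k) (x y z w : G) :
    rackCoboundary (toRackCochain c) x y z w =
      groupoidCoboundary c x y z w - groupoidCoboundary c x z (z⁻¹ * y * z) w
        + groupoidCoboundary c x z w ((z * w)⁻¹ * y * (z * w))
        - groupoidCoboundary c x y w (w⁻¹ * z * w)
        + groupoidCoboundary c x w (w⁻¹ * y * w) (w⁻¹ * z * w)
        - groupoidCoboundary c x w (w⁻¹ * z * w) ((z * w)⁻¹ * y * (z * w)) := by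
  simp only [rackCoboundary, toRackCochain, groupoidCoboundary, mul_assoc, mul_inv_rev, inv_inv,
    mul_inv_cancel_left]
  abel

end ConjGroupoidCocycle

open ConjGroupoidCocycle in
/-- If `c : G³ → k` is a conjugate-groupoid 3-cocycle, i.e.
`c(x,y,z) + c(x,yz,w) = c(x ◁ y, z, w) + c(x,y,zw)` where `x ◁ y = y⁻¹xy`, then
`θ(x,y,z) = c(x,y,z) − c(x,z,z⁻¹yz)` satisfies the rack 3-cocycle condition. -/
theorem groupoid_three_cocycle_gives_rack_three_cocycle (G k : Type*) [Group G]
    [AddCommGroup k] (c : G → G → G → k)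
    (hcoc : ∀ x y z w : G,
      c x y z + c x (y * z) w = c (y⁻¹ * x * y) z w + c x y (z * w)) :
    letI conj : G → G → G := fun x y => y⁻¹ * x * y
    letI θ : G → G → G → k := fun x y z => c x y z - c x z (z⁻¹ * y * z)
    ∀ x y z w : G,
      θ x y z + θ (conj x z) (conj y z) w + θ x z w =
        θ (conj x y) z w + θ x y w + θ (conj x w) (conj y w) (conj z w) := by
  have hδ : ∀ x y z w : G, groupoidCoboundary c x y z w = 0 := fun x y z w => by
    rw [groupoidCoboundary, sub_sub, sub_eq_zero, hcoc]
  intro x y z w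
  have h := rackCoboundary_toRackCochain c x y z w
  simp only [hδ, sub_self, add_zero] at h
  rwa [rackCoboundary, sub_eq_zero] at h
end
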